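/- Let K ∈ 𝒜_ℒ⁰ and F ∈ 𝒜. If F ∩ K = K then Q^fd_*(F|K) = 1. If F ∩ K ≠ K, then Q^fd_*(F|K) = (∫ σ(F∩K|H_i) π(dH_i)) / π(K) when π(K) > 0, and Q^fd_*(F|K) = inf{σ(F|H_i) : H_i ∈ ℒ, H_i ⊆ K} when π(K) = 0. -/

import Mathlib

open Set

open scoped Classical

variable {Ω : Type*}

/-- A field of sets on `Ω`: contains `univ`, closed under complements and finite unions. -/
def IsSetField (𝒜 : Set (Set Ω)) : Prop :=
  Set.univ ∈ 𝒜 ∧ (∀ A ∈ 𝒜, Aᶜ ∈ 𝒜) ∧ ∀ A ∈ 𝒜, ∀ B ∈ 𝒜, A ∪ B ∈ 𝒜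

/-- A finitely additive probability on the field `𝒜`. -/
def IsFAP (𝒜 : Set (Set Ω)) (P : Set Ω → ℝ) : Prop :=
  (∀ A ∈ 𝒜, 0 ≤ P A ∧ P A ≤ 1) ∧ P Set.univ = 1 ∧
    ∀ A ∈ 𝒜, ∀ B ∈ 𝒜, Disjoint A B → P (A ∪ B) = P A + P B

/-- A partition of `Ω` into nonempty pairwise disjoint pieces. -/
def IsPartition {ι : Type*} (H : ι → Set Ω) : Prop :=
  (∀ i, (H i).Nonempty) ∧ (Pairwise fun i j => Disjoint (H i) (H j)) ∧
    (⋃ i, H i) = Set.univ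

/-- A field containing every member of the partition `H` and whose members are
unions of members of the partition. -/
def IsFieldOver {ι : Type*} (H : ι → Set Ω) (𝒜L : Set (Set Ω)) : Prop :=
  IsSetField 𝒜L ∧ (∀ i, H i ∈ 𝒜L) ∧ ∀ A ∈ 𝒜L, ∃ S : Set ι, A = ⋃ i ∈ S, H i

/-- A field containing `𝒜L ∪ 𝒜E` whose members are unions of the atoms `H i ∩ E j`. -/
def IsJointField {ι κ : Type*} (H : ι → Set Ω) (E : κ → Set Ω)
    (𝒜L 𝒜E 𝒜 : Set (Set Ω)) : Prop :=
  IsSetField 𝒜 ∧ 𝒜L ⊆ 𝒜 ∧ 𝒜E ⊆ 𝒜 ∧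
    ∀ A ∈ 𝒜, ∃ S : Set (ι × κ), A = ⋃ p ∈ S, H p.1 ∩ E p.2

/-- A strategy on `𝒜 × ℒ`: each `σ (·|H i)` is a finitely additive probability on `𝒜`
equal to `1` on events implied by `H i`. -/
def IsStrategy {ι : Type*} (𝒜 : Set (Set Ω)) (H : ι → Set Ω) (σ : Set Ω → ι → ℝ) : Prop :=
  ∀ i, IsFAP 𝒜 (fun F => σ F i) ∧ ∀ F ∈ 𝒜, H i ⊆ F → σ F i = 1

/-- A full conditional probability on the field `𝒜` (conditions (C1), (C2), (C3)). -/
def IsFCP (𝒜 : Set (Set Ω)) (P : Set Ω → Set Ω → ℝ) : Prop :=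
  (∀ E ∈ 𝒜, ∀ K ∈ 𝒜, K.Nonempty → P E K = P (E ∩ K) K) ∧
  (∀ K ∈ 𝒜, K.Nonempty → IsFAP 𝒜 fun E => P E K) ∧
  ∀ E ∈ 𝒜, ∀ F ∈ 𝒜, ∀ K ∈ 𝒜, K.Nonempty → (E ∩ K).Nonempty →
    P (E ∩ F) K = P E K * P F (E ∩ K)

/-- `P` extends the prior `π` on `𝒜L` and the strategy `σ` on `𝒜 × ℒ`. -/
def ExtendsPriorStrategy {ι : Type*} (𝒜 𝒜L : Set (Set Ω)) (H : ι → Set Ω)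
    (π : Set Ω → ℝ) (σ : Set Ω → ι → ℝ) (P : Set Ω → Set Ω → ℝ) : Prop :=
  (∀ B ∈ 𝒜L, P B Set.univ = π B) ∧ ∀ F ∈ 𝒜, ∀ i, P F (H i) = σ F i

/-- The set `𝒫` of full conditional probabilities on `𝒜` extending `{π, σ}`. -/
def FCPSet {ι : Type*} (𝒜 𝒜L : Set (Set Ω)) (H : ι → Set Ω)
    (π : Set Ω → ℝ) (σ : Set Ω → ι → ℝ) : Set (Set Ω → Set Ω → ℝ) :=
  {P | IsFCP 𝒜 P ∧ ExtendsPriorStrategy 𝒜 𝒜L H π σ P}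

/-- Lower envelope of a set of conditional probabilities at `F|K`. -/
noncomputable def lowEnv (Ps : Set (Set Ω → Set Ω → ℝ)) (F K : Set Ω) : ℝ :=
  sInf ((fun P => P F K) '' Ps)

/-- Upper envelope of a set of conditional probabilities at `F|K`. -/
noncomputable def upEnv (Ps : Set (Set Ω → Set Ω → ℝ)) (F K : Set Ω) : ℝ :=
  sSup ((fun P => P F K) '' Ps)

/-- A finite partition of `Ω` contained in `𝒜L`. -/
def IsFinPart (𝒜L : Set (Set Ω)) (T : Finset (Set Ω)) : Prop :=
  (↑T : Set (Set Ω)) ⊆ 𝒜L ∧ (∀ A ∈ T, (A : Set Ω).Nonempty) ∧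
    (∀ A ∈ T, ∀ B ∈ T, A ≠ B → Disjoint A B) ∧ ⋃₀ (↑T : Set (Set Ω)) = Set.univ

/-- Lower Stieltjes integral of `X : ℒ → ℝ` with respect to `μ` on `𝒜L`. -/
noncomputable def lowerSInt {ι : Type*} (H : ι → Set Ω) (𝒜L : Set (Set Ω))
    (X : ι → ℝ) (μ : Set Ω → ℝ) : ℝ :=
  sSup {x | ∃ T : Finset (Set Ω), IsFinPart 𝒜L T ∧
    x = ∑ A ∈ T, sInf {y | ∃ i, H i ⊆ A ∧ y = X i} * μ A}

/-- Upper Stieltjes integral of `X : ℒ → ℝ` with respect to `μ` on `𝒜L`. -/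
noncomputable def upperSInt {ι : Type*} (H : ι → Set Ω) (𝒜L : Set (Set Ω))
    (X : ι → ℝ) (μ : Set Ω → ℝ) : ℝ :=
  sInf {x | ∃ T : Finset (Set Ω), IsFinPart 𝒜L T ∧
    x = ∑ A ∈ T, sSup {y | ∃ i, H i ⊆ A ∧ y = X i} * μ A}

/-- `𝒜L`-continuity of a bounded function `X : ℒ → ℝ`. -/
def ALContinuous {ι : Type*} (H : ι → Set Ω) (𝒜L : Set (Set Ω)) (X : ι → ℝ) : Prop :=
  (∃ M : ℝ, ∀ i, |X i| ≤ M) ∧ ∀ t : ℝ, ∀ ε > (0 : ℝ), ∃ A ∈ 𝒜L,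
    (⋃ i ∈ {i | t + ε ≤ X i}, H i) ⊆ A ∧ A ⊆ ⋃ i ∈ {i | t ≤ X i}, H i

/-- Countable additivity of `P` on the field `𝒜`. -/
def CountablyAdditiveOn (𝒜 : Set (Set Ω)) (P : Set Ω → ℝ) : Prop :=
  ∀ A : ℕ → Set Ω, (∀ n, A n ∈ 𝒜) → (Pairwise fun m n => Disjoint (A m) (A n)) →
    (⋃ n, A n) ∈ 𝒜 → HasSum (fun n => P (A n)) (P (⋃ n, A n))

/-- A (normalized) capacity on the field `𝒜`. -/
def IsCapacity (𝒜 : Set (Set Ω)) (φ : Set Ω → ℝ) : Prop :=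
  φ ∅ = 0 ∧ φ Set.univ = 1 ∧ (∀ A ∈ 𝒜, 0 ≤ φ A ∧ φ A ≤ 1) ∧
    ∀ A ∈ 𝒜, ∀ B ∈ 𝒜, A ⊆ B → φ A ≤ φ B

/-- Total monotonicity of a capacity `φ` on the field `𝒜`. -/
def TotallyMonotone (𝒜 : Set (Set Ω)) (φ : Set Ω → ℝ) : Prop :=
  ∀ n : ℕ, 2 ≤ n → ∀ A : Fin n → Set Ω, (∀ i, A i ∈ 𝒜) →
    ∑ s ∈ Finset.univ.powerset.filter (fun s : Finset (Fin n) => s.Nonempty),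
      (-1 : ℝ) ^ (s.card - 1) * φ (⋂ i ∈ s, A i) ≤ φ (⋃ i, A i)

/-- Restriction of a conditional probability to the domain `𝒜 × ℬ⁰`, viewed as a point
of the product space `ℝ^(𝒜 × ℬ⁰)`. -/
def restrictPairs (𝒜 ℬ : Set (Set Ω)) (Q : Set Ω → Set Ω → ℝ)
    (p : {p : Set Ω × Set Ω // p.1 ∈ 𝒜 ∧ p.2 ∈ ℬ ∧ p.2.Nonempty}) : ℝ :=
  Q p.val.1 p.val.2

/-- Restriction of a set function to the domain `𝒜`, viewed as a point of `ℝ^𝒜`. -/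
def restrictDom (𝒜 : Set (Set Ω)) (μ : Set Ω → ℝ) (A : {A : Set Ω // A ∈ 𝒜}) : ℝ :=
  μ A.val

/-- The field of all unions of members of the partition `H`, i.e. `⟨ℒ⟩*`. -/
def unionsOf {ι : Type*} (H : ι → Set Ω) : Set (Set Ω) :=
  {A | ∃ S : Set ι, A = ⋃ i ∈ S, H i}

/-- The set `𝒬^fd` of fully ℒ-disintegrable full conditional probabilities on `𝒜`
extending `{π, σ}`. -/
def QfdSet {ι : Type*} (𝒜 𝒜L : Set (Set Ω)) (H : ι → Set Ω)
    (π : Set Ω → ℝ) (σ : Set Ω → ι → ℝ) : Set (Set Ω → Set Ω → ℝ) :=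
  {Q | IsFCP 𝒜 Q ∧ ExtendsPriorStrategy 𝒜 𝒜L H π σ Q ∧
    ∀ F ∈ 𝒜, ∀ K ∈ 𝒜L, K.Nonempty →
      Q F K = lowerSInt H 𝒜L (fun i => σ F i) fun B => Q B K}

/-- The set `𝒬^fsc` of fully strongly ℒ-conglomerable full conditional probabilities
on `𝒜` extending `{π, σ}`. -/
def QfscSet {ι : Type*} (𝒜 𝒜L : Set (Set Ω)) (H : ι → Set Ω)
    (π : Set Ω → ℝ) (σ : Set Ω → ι → ℝ) : Set (Set Ω → Set Ω → ℝ) :=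
  {Q | IsFCP 𝒜 Q ∧ ExtendsPriorStrategy 𝒜 𝒜L H π σ Q ∧
    ∀ F ∈ 𝒜, ∀ K ∈ 𝒜L, K.Nonempty → ∀ B ∈ 𝒜L, B.Nonempty → B ⊆ K →
      Q B K * sInf {x | ∃ i, H i ⊆ B ∧ x = σ F i} ≤ Q (F ∩ B) K ∧
      Q (F ∩ B) K ≤ Q B K * sSup {x | ∃ i, H i ⊆ B ∧ x = σ F i}}

/-- The set `𝒫^sc` of strongly ℒ-conglomerable joint probabilities consistent with `{π, σ}`. -/
def PscSet {ι : Type*} (𝒜 𝒜L : Set (Set Ω)) (H : ι → Set Ω)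
    (π : Set Ω → ℝ) (σ : Set Ω → ι → ℝ) : Set (Set Ω → ℝ) :=
  {μ | (∃ P ∈ FCPSet 𝒜 𝒜L H π σ, μ = fun F => P F Set.univ) ∧
    ∀ F ∈ 𝒜, ∀ B ∈ 𝒜L, B.Nonempty →
      π B * sInf {x | ∃ i, H i ⊆ B ∧ x = σ F i} ≤ μ (F ∩ B) ∧
      μ (F ∩ B) ≤ π B * sSup {x | ∃ i, H i ⊆ B ∧ x = σ F i}}

/-- The set `𝒫^fd` of fully ℒ-disintegrable conditional probabilities on `𝒜 × 𝒜L⁰`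
extending `{π, σ}`. -/
def PfdSet {ι : Type*} (𝒜 𝒜L : Set (Set Ω)) (H : ι → Set Ω)
    (π : Set Ω → ℝ) (σ : Set Ω → ι → ℝ) : Set (Set Ω → Set Ω → ℝ) :=
  {P | (∀ E ∈ 𝒜, ∀ K ∈ 𝒜L, K.Nonempty → P E K = P (E ∩ K) K) ∧
    (∀ K ∈ 𝒜L, K.Nonempty → IsFAP 𝒜 fun E => P E K) ∧
    (∀ E ∈ 𝒜, ∀ F ∈ 𝒜, ∀ K ∈ 𝒜L, K.Nonempty → E ∩ K ∈ 𝒜L → (E ∩ K).Nonempty →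
      P (E ∩ F) K = P E K * P F (E ∩ K)) ∧
    (∀ B ∈ 𝒜L, P B Set.univ = π B) ∧ (∀ F ∈ 𝒜, ∀ i, P F (H i) = σ F i) ∧
    ∀ F ∈ 𝒜, ∀ K ∈ 𝒜L, K.Nonempty →
      P F K = lowerSInt H 𝒜L (fun i => σ F i) fun B => P B K}

/-- The Choquet integral `C∫ X dφ = ∫₀¹ φ₊((X ≥ t)) dt` of a `[0,1]`-valued `X : ℒ → ℝ`
with respect to a capacity `φ` on `𝒜L`, where `φ₊` is the inner extension of `φ`. -/
noncomputable def choquetInt {ι : Type*} (H : ι → Set Ω) (𝒜L : Set (Set Ω))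
    (X : ι → ℝ) (φ : Set Ω → ℝ) : ℝ :=
  ∫ t in (0 : ℝ)..(1 : ℝ),
    sSup {y | ∃ B ∈ 𝒜L, B ⊆ (⋃ i ∈ {i | t ≤ X i}, H i) ∧ y = φ B}

/-!
Every `Q ∈ 𝒬^fd` satisfies `Q(F|K) = ∫ σ(F|·) dQ(·|K)`. If `π K > 0`, (C3) with the conditioning
event `Ω` forces `Q(·|K) = π(· ∩ K) / π K` on `𝒜L`, so `Q(F|K)` is the same for every `Q`. If
`π K = 0`, the two-cell partition `{K, Kᶜ}` in the lower Stieltjes integral gives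
`Q(F|K) ≥ inf {σ(F|H i) : H i ⊆ K}`.

For the converse, and for `𝒬^fd ≠ ∅`, each piece `H i₀` yields a member of `𝒬^fd`: condition
lexicographically along the chain of finitely additive probabilities formed by the strategic
measure `G ↦ ∫ σ(G|·) dπ`, then `σ(·|H i₀)`, then `σ(·|H ω)` and the point mass at `ω` along a
well-order of `Ω`. Additivity of the strategic measure is where `𝒜L`-continuity enters: it makes
each `σ(G|·)` Riemann integrable, so the lower integral is additive. On a `π`-null `K ⊇ H i₀` the
first tier charging `K` is `σ(·|H i₀)`, which realises the value `σ(F|H i₀)`.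
-/

section

variable {ι : Type*}

namespace IsSetField

variable {𝒜 : Set (Set Ω)} {A B : Set Ω}

theorem compl_mem (h : IsSetField 𝒜) (hA : A ∈ 𝒜) : Aᶜ ∈ 𝒜 := h.2.1 A hA

theorem union_mem (h : IsSetField 𝒜) (hA : A ∈ 𝒜) (hB : B ∈ 𝒜) : A ∪ B ∈ 𝒜 :=
  h.2.2 A hA B hB

theorem empty_mem (h : IsSetField 𝒜) : ∅ ∈ 𝒜 := by
  simpa using h.compl_mem h.1

theorem inter_mem (h : IsSetField 𝒜) (hA : A ∈ 𝒜) (hB : B ∈ 𝒜) : A ∩ B ∈ 𝒜 := by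
  simpa [compl_union] using h.compl_mem (h.union_mem (h.compl_mem hA) (h.compl_mem hB))

theorem diff_mem (h : IsSetField 𝒜) (hA : A ∈ 𝒜) (hB : B ∈ 𝒜) : A \ B ∈ 𝒜 :=
  h.inter_mem hA (h.compl_mem hB)

theorem sUnion_mem (h : IsSetField 𝒜) {T : Finset (Set Ω)} (hT : ↑T ⊆ 𝒜) :
    ⋃₀ (↑T : Set (Set Ω)) ∈ 𝒜 := by
  induction T using Finset.induction_on with
  | empty => simpa using h.empty_mem
  | insert A T _ ih =>
    rw [Finset.coe_insert, sUnion_insert]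
    exact h.union_mem (hT (by simp)) (ih fun B hB => hT (by simp [hB]))

end IsSetField

namespace IsFAP

variable {𝒜 : Set (Set Ω)} {μ : Set Ω → ℝ} {A B K : Set Ω}

theorem nonneg (hμ : IsFAP 𝒜 μ) (hA : A ∈ 𝒜) : 0 ≤ μ A := (hμ.1 A hA).1

theorem le_one (hμ : IsFAP 𝒜 μ) (hA : A ∈ 𝒜) : μ A ≤ 1 := (hμ.1 A hA).2

theorem union (hμ : IsFAP 𝒜 μ) (hA : A ∈ 𝒜) (hB : B ∈ 𝒜) (hd : Disjoint A B) :
    μ (A ∪ B) = μ A + μ B :=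
  hμ.2.2 A hA B hB hd

theorem empty (hμ : IsFAP 𝒜 μ) (h𝒜 : IsSetField 𝒜) : μ ∅ = 0 := by
  have := hμ.union h𝒜.empty_mem h𝒜.empty_mem (by simp)
  simp only [union_empty] at this
  linarith

theorem mono (hμ : IsFAP 𝒜 μ) (h𝒜 : IsSetField 𝒜) (hA : A ∈ 𝒜) (hB : B ∈ 𝒜) (hAB : A ⊆ B) :
    μ A ≤ μ B := by
  have := hμ.union hA (h𝒜.diff_mem hB hA) disjoint_sdiff_right
  rw [union_sdiff_cancel hAB] at this
  linarith [hμ.nonneg (h𝒜.diff_mem hB hA)]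

theorem of_subset {ℬ : Set (Set Ω)} (hμ : IsFAP 𝒜 μ) (hℬ : ℬ ⊆ 𝒜) : IsFAP ℬ μ :=
  ⟨fun A hA => hμ.1 A (hℬ hA), hμ.2.1, fun A hA B hB => hμ.2.2 A (hℬ hA) B (hℬ hB)⟩

theorem sUnion (hμ : IsFAP 𝒜 μ) (h𝒜 : IsSetField 𝒜) {T : Finset (Set Ω)} (hT : ↑T ⊆ 𝒜)
    (hd : ∀ A ∈ T, ∀ B ∈ T, A ≠ B → Disjoint A B) :
    μ (⋃₀ (↑T : Set (Set Ω))) = ∑ A ∈ T, μ A := by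
  induction T using Finset.induction_on with
  | empty => simpa using hμ.empty h𝒜
  | insert A T hAT ih =>
    have hT' : ↑T ⊆ 𝒜 := fun B hB => hT (by simp [hB])
    have hdisj : Disjoint A (⋃₀ (↑T : Set (Set Ω))) :=
      disjoint_sUnion_right.2 fun B hB =>
        hd A (by simp) B (by simp_all) (by rintro rfl; exact hAT hB)
    rw [Finset.coe_insert, sUnion_insert, Finset.sum_insert hAT,
      hμ.union (hT (by simp)) (h𝒜.sUnion_mem hT') hdisj,
      ih hT' fun A hA B hB => hd A (by simp [hA]) B (by simp [hB])]

theorem cond (hμ : IsFAP 𝒜 μ) (h𝒜 : IsSetField 𝒜) (hK : K ∈ 𝒜) (hpos : 0 < μ K) :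
    IsFAP 𝒜 fun A => μ (A ∩ K) / μ K := by
  refine ⟨fun A hA => ⟨?_, ?_⟩, by simp [hpos.ne'], fun A hA B hB hd => ?_⟩
  · exact div_nonneg (hμ.nonneg (h𝒜.inter_mem hA hK)) hpos.le
  · exact (div_le_one hpos).2 (hμ.mono h𝒜 (h𝒜.inter_mem hA hK) hK inter_subset_right)
  · simp only
    rw [union_inter_distrib_right, hμ.union (h𝒜.inter_mem hA hK) (h𝒜.inter_mem hB hK)
      (hd.mono inter_subset_left inter_subset_left), add_div]

end IsFAP

theorem isFAP_dirac (𝒜 : Set (Set Ω)) (ω : Ω) : IsFAP 𝒜 fun G => if ω ∈ G then 1 else 0 := by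
  refine ⟨fun A _ => by dsimp only; split_ifs <;> norm_num, by simp, fun A _ B _ hd => ?_⟩
  by_cases hA : ω ∈ A
  · simp [hA, disjoint_left.1 hd hA]
  · by_cases hB : ω ∈ B <;> simp [hA, hB]

namespace IsPartition

variable {H : ι → Set Ω} {ω : Ω} {i j : ι}

theorem exists_mem (hH : IsPartition H) (ω : Ω) : ∃ i, ω ∈ H i := by
  simpa [← hH.2.2] using mem_univ ω

theorem eq_of_mem (hH : IsPartition H) (hi : ω ∈ H i) (hj : ω ∈ H j) : i = j := by
  by_contra hij
  exact disjoint_left.1 (hH.2.1 hij) hi hj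

theorem eq_of_subset (hH : IsPartition H) (h : H i ⊆ H j) : i = j :=
  hH.eq_of_mem (hH.1 i).some_mem (h (hH.1 i).some_mem)

theorem mem_of_subset_biUnion (hH : IsPartition H) {S : Set ι} (h : H j ⊆ ⋃ i ∈ S, H i) :
    j ∈ S := by
  obtain ⟨i, hiS, hi⟩ := mem_iUnion₂.1 (h (hH.1 j).some_mem)
  rwa [hH.eq_of_mem (hH.1 j).some_mem hi]

noncomputable def pieceOf (hH : IsPartition H) (ω : Ω) : ι := (hH.exists_mem ω).choose

theorem mem_pieceOf (hH : IsPartition H) (ω : Ω) : ω ∈ H (hH.pieceOf ω) :=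
  (hH.exists_mem ω).choose_spec

end IsPartition

namespace IsFieldOver

variable {H : ι → Set Ω} {𝒜L : Set (Set Ω)} {B C : Set Ω} {ω : Ω}

theorem exists_piece (h𝒜L : IsFieldOver H 𝒜L) (hB : B ∈ 𝒜L) (hω : ω ∈ B) :
    ∃ i, ω ∈ H i ∧ H i ⊆ B := by
  obtain ⟨S, rfl⟩ := h𝒜L.2.2 B hB
  obtain ⟨i, hiS, hωi⟩ := mem_iUnion₂.1 hω
  exact ⟨i, hωi, subset_biUnion_of_mem hiS⟩

theorem exists_piece_subset (h𝒜L : IsFieldOver H 𝒜L) (hB : B ∈ 𝒜L) (hne : B.Nonempty) :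
    ∃ i, H i ⊆ B :=
  (h𝒜L.exists_piece hB hne.some_mem).imp fun _ => And.right

theorem subset_of_forall_piece (h𝒜L : IsFieldOver H 𝒜L) (hB : B ∈ 𝒜L)
    (h : ∀ i, H i ⊆ B → H i ⊆ C) : B ⊆ C := fun _ hω =>
  let ⟨i, hωi, hiB⟩ := h𝒜L.exists_piece hB hω
  h i hiB hωi

theorem subset_or_disjoint (h𝒜L : IsFieldOver H 𝒜L) (hH : IsPartition H) (hB : B ∈ 𝒜L)
    (i : ι) : H i ⊆ B ∨ Disjoint (H i) B := by
  refine or_iff_not_imp_right.2 fun hnd => ?_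
  obtain ⟨ω, hωi, hωB⟩ := not_disjoint_iff.1 hnd
  obtain ⟨j, hωj, hjB⟩ := h𝒜L.exists_piece hB hωB
  rwa [hH.eq_of_mem hωi hωj]

theorem pieceOf_subset (h𝒜L : IsFieldOver H 𝒜L) (hH : IsPartition H) (hB : B ∈ 𝒜L)
    (hω : ω ∈ B) : H (hH.pieceOf ω) ⊆ B :=
  (h𝒜L.subset_or_disjoint hH hB _).resolve_right
    (not_disjoint_iff.2 ⟨ω, hH.mem_pieceOf ω, hω⟩)

end IsFieldOver

namespace IsStrategy

variable {𝒜 : Set (Set Ω)} {H : ι → Set Ω} {σ : Set Ω → ι → ℝ} {F K : Set Ω} {i : ι}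

theorem isFAP (hσ : IsStrategy 𝒜 H σ) (i : ι) : IsFAP 𝒜 (σ · i) := (hσ i).1

theorem eq_one (hσ : IsStrategy 𝒜 H σ) (hF : F ∈ 𝒜) (h : H i ⊆ F) : σ F i = 1 :=
  (hσ i).2 F hF h

theorem nonneg (hσ : IsStrategy 𝒜 H σ) (hF : F ∈ 𝒜) (i : ι) : 0 ≤ σ F i :=
  (hσ.isFAP i).nonneg hF

theorem le_one (hσ : IsStrategy 𝒜 H σ) (hF : F ∈ 𝒜) (i : ι) : σ F i ≤ 1 :=
  (hσ.isFAP i).le_one hF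

theorem eq_zero (hσ : IsStrategy 𝒜 H σ) (h𝒜 : IsSetField 𝒜) (hF : F ∈ 𝒜)
    (h : Disjoint (H i) F) : σ F i = 0 := by
  have h1 := hσ.eq_one (h𝒜.compl_mem hF) h.subset_compl_right
  have h2 := (hσ.isFAP i).union hF (h𝒜.compl_mem hF) disjoint_compl_right
  rw [union_compl_self] at h2
  linarith [(hσ i).1.2.1]

theorem inter_eq (hσ : IsStrategy 𝒜 H σ) (h𝒜 : IsSetField 𝒜) (hF : F ∈ 𝒜) (hK : K ∈ 𝒜)
    (h : H i ⊆ K) : σ (F ∩ K) i = σ F i := by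
  have hu := (hσ.isFAP i).union (h𝒜.inter_mem hF hK) (h𝒜.diff_mem hF hK)
    (disjoint_sdiff_right.mono_left inter_subset_right)
  rw [inter_union_sdiff, hσ.eq_zero h𝒜 (h𝒜.diff_mem hF hK)
    (disjoint_sdiff_right.mono_left h)] at hu
  linarith

theorem eq_indicator (hσ : IsStrategy 𝒜 H σ) (h𝒜 : IsSetField 𝒜) {𝒜L : Set (Set Ω)}
    (hH : IsPartition H) (h𝒜L : IsFieldOver H 𝒜L) (hsub : 𝒜L ⊆ 𝒜) {B : Set Ω}
    (hB : B ∈ 𝒜L) (i : ι) : σ B i = if H i ⊆ B then 1 else 0 := by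
  split_ifs with h
  · exact hσ.eq_one (hsub hB) h
  · exact hσ.eq_zero h𝒜 (hsub hB) ((h𝒜L.subset_or_disjoint hH hB i).resolve_left h)

theorem subset_of_pos (hσ : IsStrategy 𝒜 H σ) (h𝒜 : IsSetField 𝒜) {𝒜L : Set (Set Ω)}
    (hH : IsPartition H) (h𝒜L : IsFieldOver H 𝒜L) (hsub : 𝒜L ⊆ 𝒜) (hK : K ∈ 𝒜L)
    (hpos : 0 < σ K i) : H i ⊆ K := by
  by_contra h
  rw [hσ.eq_indicator h𝒜 hH h𝒜L hsub hK, if_neg h] at hpos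
  exact hpos.false

theorem inter_div_eq (hσ : IsStrategy 𝒜 H σ) (h𝒜 : IsSetField 𝒜) (hF : F ∈ 𝒜) (hK : K ∈ 𝒜)
    (h : H i ⊆ K) : σ (F ∩ K) i / σ K i = σ F i := by
  rw [hσ.inter_eq h𝒜 hF hK h, hσ.eq_one hK h, div_one]

end IsStrategy

noncomputable def infOn (H : ι → Set Ω) (X : ι → ℝ) (A : Set Ω) : ℝ :=
  sInf {y | ∃ i, H i ⊆ A ∧ y = X i}

section InfOn

variable {H : ι → Set Ω} {𝒜L : Set (Set Ω)} {X Y : ι → ℝ} {A : Set Ω} {i : ι} {c : ℝ}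

theorem infOn_nonneg (hX : ∀ i, 0 ≤ X i) (A : Set Ω) : 0 ≤ infOn H X A :=
  Real.sInf_nonneg <| by rintro y ⟨i, -, rfl⟩; exact hX i

theorem infOn_le (hX : ∀ i, 0 ≤ X i) (hi : H i ⊆ A) : infOn H X A ≤ X i :=
  csInf_le ⟨0, by rintro y ⟨j, -, rfl⟩; exact hX j⟩ ⟨i, hi, rfl⟩

theorem le_infOn (h𝒜L : IsFieldOver H 𝒜L) (hA : A ∈ 𝒜L) (hne : A.Nonempty)
    (h : ∀ i, H i ⊆ A → c ≤ X i) : c ≤ infOn H X A :=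
  let ⟨i, hi⟩ := h𝒜L.exists_piece_subset hA hne
  le_csInf ⟨X i, i, hi, rfl⟩ <| by rintro y ⟨j, hj, rfl⟩; exact h j hj

theorem infOn_eq_of_forall (h𝒜L : IsFieldOver H 𝒜L) (hA : A ∈ 𝒜L) (hne : A.Nonempty)
    (h : ∀ i, H i ⊆ A → X i = c) : infOn H X A = c := by
  obtain ⟨i, hi⟩ := h𝒜L.exists_piece_subset hA hne
  refine le_antisymm ?_ (le_infOn h𝒜L hA hne fun j hj => (h j hj).ge)
  have hbdd : BddBelow {y | ∃ i, H i ⊆ A ∧ y = X i} :=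
    ⟨c, by rintro y ⟨j, hj, rfl⟩; exact (h j hj).ge⟩
  exact (csInf_le hbdd ⟨i, hi, rfl⟩).trans (h i hi).le

theorem infOn_congr (h : ∀ i, H i ⊆ A → X i = Y i) : infOn H X A = infOn H Y A := by
  unfold infOn
  congr 1
  ext y
  exact exists_congr fun i => and_congr_right fun hi => by rw [h i hi]

theorem infOn_anti (hX : ∀ i, 0 ≤ X i) (h𝒜L : IsFieldOver H 𝒜L) {A' : Set Ω}
    (hA' : A' ∈ 𝒜L) (hne : A'.Nonempty) (hA'A : A' ⊆ A) : infOn H X A ≤ infOn H X A' :=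
  le_infOn h𝒜L hA' hne fun _ hi => infOn_le hX (hi.trans hA'A)

theorem infOn_add_infOn_le (h𝒜L : IsFieldOver H 𝒜L) (hA : A ∈ 𝒜L) (hne : A.Nonempty)
    (hX : ∀ i, 0 ≤ X i) (hY : ∀ i, 0 ≤ Y i) :
    infOn H X A + infOn H Y A ≤ infOn H (X + Y) A :=
  le_infOn h𝒜L hA hne fun _ hi => add_le_add (infOn_le hX hi) (infOn_le hY hi)

theorem infOn_add_le (h𝒜L : IsFieldOver H 𝒜L) (hA : A ∈ 𝒜L) (hne : A.Nonempty)
    (hX : ∀ i, 0 ≤ X i) (hY : ∀ i, 0 ≤ Y i) {ε : ℝ}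
    (hosc : ∀ i j, H i ⊆ A → H j ⊆ A → Y i ≤ Y j + ε) :
    infOn H (X + Y) A ≤ infOn H X A + infOn H Y A + ε := by
  have hXY : ∀ i, 0 ≤ (X + Y) i := fun i => add_nonneg (hX i) (hY i)
  have hle : infOn H (X + Y) A - ε - infOn H X A ≤ infOn H Y A := by
    refine le_infOn h𝒜L hA hne fun j hj => ?_
    have : infOn H (X + Y) A - ε - Y j ≤ infOn H X A :=
      le_infOn h𝒜L hA hne fun i hi => by
        have := infOn_le hXY hi
        simp only [Pi.add_apply] at this
        linarith [hosc i j hi hj]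
    linarith
  linarith

end InfOn

section FinPart

variable {𝒜L : Set (Set Ω)} {T T' : Finset (Set Ω)} {A B : Set Ω} {ω : Ω}

namespace IsFinPart

theorem mem (hT : IsFinPart 𝒜L T) (hA : A ∈ T) : A ∈ 𝒜L := hT.1 hA

theorem nonempty (hT : IsFinPart 𝒜L T) (hA : A ∈ T) : A.Nonempty := hT.2.1 A hA

theorem exists_mem (hT : IsFinPart 𝒜L T) (ω : Ω) : ∃ A ∈ T, ω ∈ A := by
  simpa [← hT.2.2.2] using mem_univ ω

theorem eq_of_mem (hT : IsFinPart 𝒜L T) (hA : A ∈ T) (hB : B ∈ T) (hωA : ω ∈ A)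
    (hωB : ω ∈ B) : A = B := by
  by_contra hAB
  exact disjoint_left.1 (hT.2.2.1 A hA B hB hAB) hωA hωB

theorem sum_eq_one (hT : IsFinPart 𝒜L T) (h𝒜L : IsSetField 𝒜L) {μ : Set Ω → ℝ}
    (hμ : IsFAP 𝒜L μ) : ∑ A ∈ T, μ A = 1 := by
  rw [← hμ.sUnion h𝒜L hT.1 hT.2.2.1, hT.2.2.2, hμ.2.1]

end IsFinPart

theorem isFinPart_filter_nonempty (hT𝒜 : ↑T ⊆ 𝒜L)
    (hd : ∀ A ∈ T, ∀ B ∈ T, A ≠ B → Disjoint A B) (hcover : ⋃₀ (↑T : Set (Set Ω)) = univ) :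
    IsFinPart 𝒜L (T.filter (·.Nonempty)) := by
  refine ⟨fun A hA => hT𝒜 (Finset.mem_filter.1 hA).1, fun A hA => (Finset.mem_filter.1 hA).2,
    fun A hA B hB => hd A (Finset.mem_filter.1 hA).1 B (Finset.mem_filter.1 hB).1,
    eq_univ_of_forall fun ω => ?_⟩
  obtain ⟨A, hA, hωA⟩ := hcover ▸ mem_univ ω
  exact ⟨A, Finset.mem_filter.2 ⟨hA, ω, hωA⟩, hωA⟩

noncomputable def pairPart (B : Set Ω) : Finset (Set Ω) :=
  ({B, Bᶜ} : Finset (Set Ω)).filter (·.Nonempty)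

theorem eq_or_eq_compl_of_mem_pairPart (hA : A ∈ pairPart B) : A = B ∨ A = Bᶜ := by
  simpa using (Finset.mem_filter.1 hA).1

theorem isFinPart_pairPart (h𝒜L : IsSetField 𝒜L) (hB : B ∈ 𝒜L) :
    IsFinPart 𝒜L (pairPart B) := by
  refine isFinPart_filter_nonempty ?_ ?_ (by simp)
  · intro A hA
    rcases Finset.mem_insert.1 hA with rfl | hA
    · exact hB
    · exact (Finset.mem_singleton.1 hA) ▸ h𝒜L.compl_mem hB
  · simp only [Finset.mem_insert, Finset.mem_singleton]
    rintro A (rfl | rfl) A' (rfl | rfl) hne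
    exacts [absurd rfl hne, disjoint_compl_right, disjoint_compl_left, absurd rfl hne]

def Refines (T' T : Finset (Set Ω)) : Prop := ∀ A' ∈ T', ∃ A ∈ T, A' ⊆ A

theorem Refines.subset_or_subset_compl (h : Refines T' (pairPart B)) (hA : A ∈ T') :
    A ⊆ B ∨ A ⊆ Bᶜ := by
  obtain ⟨C, hC, hAC⟩ := h A hA
  rcases eq_or_eq_compl_of_mem_pairPart hC with rfl | rfl
  exacts [Or.inl hAC, Or.inr hAC]

noncomputable def commonRef (T₁ T₂ : Finset (Set Ω)) : Finset (Set Ω) :=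
  ((T₁ ×ˢ T₂).image fun p => p.1 ∩ p.2).filter (·.Nonempty)

theorem mem_commonRef {T₁ T₂ : Finset (Set Ω)} :
    A ∈ commonRef T₁ T₂ ↔ (∃ A₁ ∈ T₁, ∃ A₂ ∈ T₂, A₁ ∩ A₂ = A) ∧ A.Nonempty := by
  simp [commonRef, and_assoc]

theorem refines_commonRef_left {T₁ T₂ : Finset (Set Ω)} : Refines (commonRef T₁ T₂) T₁ := by
  intro A hA
  obtain ⟨⟨A₁, hA₁, A₂, -, rfl⟩, -⟩ := mem_commonRef.1 hA
  exact ⟨A₁, hA₁, inter_subset_left⟩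

theorem refines_commonRef_right {T₁ T₂ : Finset (Set Ω)} : Refines (commonRef T₁ T₂) T₂ := by
  intro A hA
  obtain ⟨⟨-, -, A₂, hA₂, rfl⟩, -⟩ := mem_commonRef.1 hA
  exact ⟨A₂, hA₂, inter_subset_right⟩

theorem isFinPart_commonRef (h𝒜L : IsSetField 𝒜L) {T₁ T₂ : Finset (Set Ω)}
    (h₁ : IsFinPart 𝒜L T₁) (h₂ : IsFinPart 𝒜L T₂) : IsFinPart 𝒜L (commonRef T₁ T₂) := by
  refine isFinPart_filter_nonempty ?_ ?_ ?_
  · simp only [Finset.coe_image, image_subset_iff]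
    rintro ⟨A₁, A₂⟩ hp
    obtain ⟨hA₁, hA₂⟩ := Finset.mem_product.1 hp
    exact h𝒜L.inter_mem (h₁.mem hA₁) (h₂.mem hA₂)
  · simp only [Finset.mem_image, Finset.mem_product]
    rintro _ ⟨⟨A₁, A₂⟩, ⟨hA₁, hA₂⟩, rfl⟩ _ ⟨⟨B₁, B₂⟩, ⟨hB₁, hB₂⟩, rfl⟩ hne
    refine disjoint_left.2 fun ω hA hB => hne ?_
    rw [h₁.eq_of_mem hA₁ hB₁ hA.1 hB.1, h₂.eq_of_mem hA₂ hB₂ hA.2 hB.2]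
  · refine eq_univ_of_forall fun ω => ?_
    obtain ⟨A₁, hA₁, hω₁⟩ := h₁.exists_mem ω
    obtain ⟨A₂, hA₂, hω₂⟩ := h₂.exists_mem ω
    exact ⟨A₁ ∩ A₂, Finset.mem_image.2 ⟨(A₁, A₂), Finset.mem_product.2 ⟨hA₁, hA₂⟩, rfl⟩,
      hω₁, hω₂⟩

theorem IsFinPart.sum_fiberwise_of_refines (hT : IsFinPart 𝒜L T) (hT' : IsFinPart 𝒜L T')
    (href : Refines T' T) (f : Set Ω → ℝ) :
    ∑ A ∈ T, ∑ A' ∈ T'.filter (· ⊆ A), f A' = ∑ A' ∈ T', f A' := by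
  rw [← Finset.sum_biUnion]
  · congr 1
    ext A'
    simp only [Finset.mem_biUnion, Finset.mem_filter]
    exact ⟨fun ⟨_, _, hA', _⟩ => hA', fun hA' =>
      let ⟨A, hA, hA'A⟩ := href A' hA'
      ⟨A, hA, hA', hA'A⟩⟩
  · intro A hA B hB hAB
    refine Finset.disjoint_filter.2 fun A' hA' hA'A hA'B => hAB ?_
    obtain ⟨ω, hω⟩ := hT'.nonempty hA'
    exact hT.eq_of_mem hA hB (hA'A hω) (hA'B hω)

theorem IsFinPart.apply_sUnion_filter (hT : IsFinPart 𝒜L T) (h𝒜L : IsSetField 𝒜L)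
    {μ : Set Ω → ℝ} (hμ : IsFAP 𝒜L μ) (p : Set Ω → Prop) [DecidablePred p] :
    μ (⋃₀ (↑(T.filter p) : Set (Set Ω))) = ∑ A ∈ T.filter p, μ A :=
  hμ.sUnion h𝒜L (fun _ hA => hT.mem (Finset.mem_filter.1 hA).1) fun A hA B hB =>
    hT.2.2.1 A (Finset.mem_filter.1 hA).1 B (Finset.mem_filter.1 hB).1

theorem IsFinPart.eq_sum_of_refines (hT : IsFinPart 𝒜L T) (hT' : IsFinPart 𝒜L T')
    (href : Refines T' T) (h𝒜L : IsSetField 𝒜L) {μ : Set Ω → ℝ} (hμ : IsFAP 𝒜L μ)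
    (hA : A ∈ T) : μ A = ∑ A' ∈ T'.filter (· ⊆ A), μ A' := by
  have hcover : ⋃₀ (↑(T'.filter (· ⊆ A)) : Set (Set Ω)) = A := by
    refine Subset.antisymm (sUnion_subset fun A' hA' => (Finset.mem_filter.1 hA').2)
      fun ω hω => ?_
    obtain ⟨A', hA', hωA'⟩ := hT'.exists_mem ω
    obtain ⟨B, hB, hA'B⟩ := href A' hA'
    rw [hT.eq_of_mem hA hB hω (hA'B hωA')]
    exact ⟨A', Finset.mem_filter.2 ⟨hA', hA'B⟩, hωA'⟩
  rw [← hT'.apply_sUnion_filter h𝒜L hμ, hcover]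

end FinPart

noncomputable def lowSum (H : ι → Set Ω) (X : ι → ℝ) (μ : Set Ω → ℝ) (T : Finset (Set Ω)) : ℝ :=
  ∑ A ∈ T, infOn H X A * μ A

section LowerSInt

variable {H : ι → Set Ω} {𝒜L : Set (Set Ω)} {X Y : ι → ℝ} {μ ν : Set Ω → ℝ}
  {T T' : Finset (Set Ω)}

theorem lowSum_nonneg (hμ : IsFAP 𝒜L μ) (hX : ∀ i, 0 ≤ X i) (hT : IsFinPart 𝒜L T) :
    0 ≤ lowSum H X μ T :=
  Finset.sum_nonneg fun _ hA => mul_nonneg (infOn_nonneg hX _) (hμ.nonneg (hT.mem hA))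

theorem lowSum_le (h𝒜L : IsFieldOver H 𝒜L) (hμ : IsFAP 𝒜L μ) (hX : ∀ i, 0 ≤ X i) {c : ℝ}
    (hXc : ∀ i, X i ≤ c) (hT : IsFinPart 𝒜L T) : lowSum H X μ T ≤ c := by
  calc lowSum H X μ T ≤ ∑ A ∈ T, c * μ A := Finset.sum_le_sum fun A hA => by
        obtain ⟨i, hi⟩ := h𝒜L.exists_piece_subset (hT.mem hA) (hT.nonempty hA)
        exact mul_le_mul_of_nonneg_right ((infOn_le hX hi).trans (hXc i))
          (hμ.nonneg (hT.mem hA))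
    _ = c := by rw [← Finset.mul_sum, hT.sum_eq_one h𝒜L.1 hμ, mul_one]

theorem lowSum_le_lowSum_of_refines (h𝒜L : IsFieldOver H 𝒜L) (hμ : IsFAP 𝒜L μ)
    (hX : ∀ i, 0 ≤ X i) (hT : IsFinPart 𝒜L T) (hT' : IsFinPart 𝒜L T') (href : Refines T' T) :
    lowSum H X μ T ≤ lowSum H X μ T' := by
  rw [lowSum, lowSum, ← hT.sum_fiberwise_of_refines hT' href]
  refine Finset.sum_le_sum fun A hA => ?_
  rw [hT.eq_sum_of_refines hT' href h𝒜L.1 hμ hA, Finset.mul_sum]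
  refine Finset.sum_le_sum fun A' hA' => ?_
  obtain ⟨hA'T', hA'A⟩ := Finset.mem_filter.1 hA'
  exact mul_le_mul_of_nonneg_right (infOn_anti hX h𝒜L (hT'.mem hA'T') (hT'.nonempty hA'T') hA'A)
    (hμ.nonneg (hT'.mem hA'T'))

theorem lowSum_add_lowSum_le (h𝒜L : IsFieldOver H 𝒜L) (hμ : IsFAP 𝒜L μ) (hX : ∀ i, 0 ≤ X i)
    (hY : ∀ i, 0 ≤ Y i) (hT : IsFinPart 𝒜L T) :
    lowSum H X μ T + lowSum H Y μ T ≤ lowSum H (X + Y) μ T := by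
  rw [lowSum, lowSum, lowSum, ← Finset.sum_add_distrib]
  exact Finset.sum_le_sum fun A hA => by
    rw [← add_mul]
    exact mul_le_mul_of_nonneg_right
      (infOn_add_infOn_le h𝒜L (hT.mem hA) (hT.nonempty hA) hX hY) (hμ.nonneg (hT.mem hA))

theorem lowSum_add_le (h𝒜L : IsFieldOver H 𝒜L) (hμ : IsFAP 𝒜L μ) (hX : ∀ i, 0 ≤ X i)
    (hY : ∀ i, 0 ≤ Y i) (hT : IsFinPart 𝒜L T) {ε : ℝ}
    (hosc : ∀ A ∈ T, ∀ i j, H i ⊆ A → H j ⊆ A → Y i ≤ Y j + ε) :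
    lowSum H (X + Y) μ T ≤ lowSum H X μ T + lowSum H Y μ T + ε := by
  calc lowSum H (X + Y) μ T ≤ ∑ A ∈ T, (infOn H X A * μ A + infOn H Y A * μ A + ε * μ A) :=
        Finset.sum_le_sum fun A hA => by
          rw [← add_mul, ← add_mul]
          exact mul_le_mul_of_nonneg_right
            (infOn_add_le h𝒜L (hT.mem hA) (hT.nonempty hA) hX hY (hosc A hA))
            (hμ.nonneg (hT.mem hA))
    _ = lowSum H X μ T + lowSum H Y μ T + ε := by
        rw [Finset.sum_add_distrib, Finset.sum_add_distrib, ← Finset.mul_sum,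
          hT.sum_eq_one h𝒜L.1 hμ, mul_one, lowSum, lowSum]

theorem lowerSInt_eq_sSup :
    lowerSInt H 𝒜L X μ = sSup {x | ∃ T, IsFinPart 𝒜L T ∧ x = lowSum H X μ T} := rfl

theorem lowSum_le_lowerSInt (h𝒜L : IsFieldOver H 𝒜L) (hμ : IsFAP 𝒜L μ)
    (hX0 : ∀ i, 0 ≤ X i) {c : ℝ} (hXc : ∀ i, X i ≤ c) (hT : IsFinPart 𝒜L T) :
    lowSum H X μ T ≤ lowerSInt H 𝒜L X μ :=
  le_csSup ⟨c, by rintro x ⟨T, hT, rfl⟩; exact lowSum_le h𝒜L hμ hX0 hXc hT⟩ ⟨T, hT, rfl⟩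

theorem nonempty_lowSums (h𝒜L : IsFieldOver H 𝒜L) :
    {x | ∃ T, IsFinPart 𝒜L T ∧ x = lowSum H X μ T}.Nonempty :=
  ⟨_, _, isFinPart_pairPart h𝒜L.1 h𝒜L.1.1, rfl⟩

theorem lowerSInt_le (h𝒜L : IsFieldOver H 𝒜L) {c : ℝ}
    (h : ∀ T, IsFinPart 𝒜L T → lowSum H X μ T ≤ c) : lowerSInt H 𝒜L X μ ≤ c :=
  csSup_le (nonempty_lowSums h𝒜L) fun _ ⟨T, hT, hx⟩ => hx ▸ h T hT

theorem lowerSInt_nonneg (h𝒜L : IsFieldOver H 𝒜L) (hμ : IsFAP 𝒜L μ)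
    (hX0 : ∀ i, 0 ≤ X i) (hX1 : ∀ i, X i ≤ 1) : 0 ≤ lowerSInt H 𝒜L X μ :=
  have hT := isFinPart_pairPart h𝒜L.1 h𝒜L.1.1
  (lowSum_nonneg hμ hX0 hT).trans (lowSum_le_lowerSInt h𝒜L hμ hX0 hX1 hT)

theorem lowerSInt_le_one (h𝒜L : IsFieldOver H 𝒜L) (hμ : IsFAP 𝒜L μ)
    (hX0 : ∀ i, 0 ≤ X i) (hX1 : ∀ i, X i ≤ 1) : lowerSInt H 𝒜L X μ ≤ 1 :=
  lowerSInt_le h𝒜L fun _ hT => lowSum_le h𝒜L hμ hX0 hX1 hT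

theorem lowerSInt_congr (h : ∀ B ∈ 𝒜L, μ B = ν B) :
    lowerSInt H 𝒜L X μ = lowerSInt H 𝒜L X ν := by
  have key : ∀ T, IsFinPart 𝒜L T → lowSum H X μ T = lowSum H X ν T := fun T hT =>
    Finset.sum_congr rfl fun A hA => by rw [h A (hT.mem hA)]
  rw [lowerSInt_eq_sSup, lowerSInt_eq_sSup]
  congr 1
  ext x
  exact exists_congr fun T => and_congr_right fun hT => by rw [key T hT]

theorem infOn_mul_le_lowerSInt (h𝒜L : IsFieldOver H 𝒜L) (hμ : IsFAP 𝒜L μ)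
    (hX0 : ∀ i, 0 ≤ X i) (hX1 : ∀ i, X i ≤ 1) {B : Set Ω} (hB : B ∈ 𝒜L) :
    infOn H X B * μ B ≤ lowerSInt H 𝒜L X μ := by
  have hT := isFinPart_pairPart h𝒜L.1 hB
  refine le_trans ?_ (lowSum_le_lowerSInt h𝒜L hμ hX0 hX1 hT)
  rcases B.eq_empty_or_nonempty with rfl | hne
  · rw [hμ.empty h𝒜L.1, mul_zero]
    exact lowSum_nonneg hμ hX0 hT
  · exact Finset.single_le_sum (f := fun A => infOn H X A * μ A)
      (fun A hA => mul_nonneg (infOn_nonneg hX0 A) (hμ.nonneg (hT.mem hA)))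
      (Finset.mem_filter.2 ⟨by simp, hne⟩)

end LowerSInt

section SpecialValues

variable {H : ι → Set Ω} {𝒜L : Set (Set Ω)} {X Y : ι → ℝ} {μ ν : Set Ω → ℝ}

theorem lowerSInt_eq_mul (h𝒜L : IsFieldOver H 𝒜L) (hμ : IsFAP 𝒜L μ) {B : Set Ω} (hB : B ∈ 𝒜L)
    {c : ℝ} (hc0 : 0 ≤ c) (hc1 : c ≤ 1) (hXB : ∀ i, H i ⊆ B → X i = c)
    (hXBc : ∀ i, ¬H i ⊆ B → X i = 0) : lowerSInt H 𝒜L X μ = c * μ B := by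
  have hX0 : ∀ i, 0 ≤ X i := fun i => by
    by_cases h : H i ⊆ B
    exacts [(hXB i h).symm ▸ hc0, (hXBc i h).ge]
  have hX1 : ∀ i, X i ≤ 1 := fun i => by
    by_cases h : H i ⊆ B
    exacts [(hXB i h).symm ▸ hc1, (hXBc i h).symm ▸ zero_le_one]
  refine le_antisymm (lowerSInt_le h𝒜L fun T hT => ?_) ?_
  · have hterm : ∀ A ∈ T, infOn H X A * μ A ≤ if A ⊆ B then c * μ A else 0 := by
      intro A hA
      split_ifs with hAB
      · obtain ⟨i, hi⟩ := h𝒜L.exists_piece_subset (hT.mem hA) (hT.nonempty hA)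
        exact mul_le_mul_of_nonneg_right ((infOn_le hX0 hi).trans (hXB i (hi.trans hAB)).le)
          (hμ.nonneg (hT.mem hA))
      · obtain ⟨i, hiA, hiB⟩ : ∃ i, H i ⊆ A ∧ ¬H i ⊆ B := by
          by_contra! h
          exact hAB (h𝒜L.subset_of_forall_piece (hT.mem hA) h)
        exact mul_nonpos_of_nonpos_of_nonneg ((infOn_le hX0 hiA).trans (hXBc i hiB).le)
          (hμ.nonneg (hT.mem hA))
    calc lowSum H X μ T ≤ ∑ A ∈ T, if A ⊆ B then c * μ A else 0 := Finset.sum_le_sum hterm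
      _ = c * μ (⋃₀ (↑(T.filter (· ⊆ B)) : Set (Set Ω))) := by
        rw [← Finset.sum_filter, ← Finset.mul_sum, hT.apply_sUnion_filter h𝒜L.1 hμ]
      _ ≤ c * μ B := mul_le_mul_of_nonneg_left (hμ.mono h𝒜L.1
          (h𝒜L.1.sUnion_mem fun _ hA => hT.mem (Finset.mem_filter.1 hA).1) hB
          (sUnion_subset fun _ hA => (Finset.mem_filter.1 hA).2)) hc0
  · rcases B.eq_empty_or_nonempty with rfl | hne
    · rw [hμ.empty h𝒜L.1, mul_zero]
      exact lowerSInt_nonneg h𝒜L hμ hX0 hX1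
    · rw [← infOn_eq_of_forall h𝒜L hB hne hXB]
      exact infOn_mul_le_lowerSInt h𝒜L hμ hX0 hX1 hB

theorem lowerSInt_eq_of_apply_piece_eq_one (h𝒜L : IsFieldOver H 𝒜L) (hH : IsPartition H)
    (hν : IsFAP 𝒜L ν) {i₀ : ι} (hνi₀ : ν (H i₀) = 1) (hX0 : ∀ i, 0 ≤ X i)
    (hX1 : ∀ i, X i ≤ 1) : lowerSInt H 𝒜L X ν = X i₀ := by
  have hHi₀ := h𝒜L.2.1 i₀
  have hνc : ν (H i₀)ᶜ = 0 := by
    have := hν.union hHi₀ (h𝒜L.1.compl_mem hHi₀) disjoint_compl_right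
    rw [union_compl_self, hν.2.1, hνi₀] at this
    linarith
  refine le_antisymm (lowerSInt_le h𝒜L fun T hT => ?_) ?_
  · obtain ⟨ω, hω⟩ := hH.1 i₀
    obtain ⟨A₀, hA₀, hωA₀⟩ := hT.exists_mem ω
    have hi₀A₀ : H i₀ ⊆ A₀ := (h𝒜L.subset_or_disjoint hH (hT.mem hA₀) i₀).resolve_right
      (not_disjoint_iff.2 ⟨ω, hω, hωA₀⟩)
    have hzero : ∀ A ∈ T, A ≠ A₀ → infOn H X A * ν A = 0 := fun A hA hne => by
      have hAc : A ⊆ (H i₀)ᶜ :=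
        ((hT.2.2.1 A hA A₀ hA₀ hne).mono_right hi₀A₀).subset_compl_right
      rw [le_antisymm (hνc ▸ hν.mono h𝒜L.1 (hT.mem hA) (h𝒜L.1.compl_mem hHi₀) hAc)
        (hν.nonneg (hT.mem hA)), mul_zero]
    rw [lowSum, Finset.sum_eq_single_of_mem A₀ hA₀ hzero]
    exact (mul_le_of_le_one_right (infOn_nonneg hX0 A₀) (hν.le_one (hT.mem hA₀))).trans
      (infOn_le hX0 hi₀A₀)
  · calc X i₀ = infOn H X (H i₀) * ν (H i₀) := by
          rw [hνi₀, mul_one, infOn_eq_of_forall h𝒜L hHi₀ (hH.1 i₀)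
            fun j hj => by rw [hH.eq_of_subset hj]]
      _ ≤ lowerSInt H 𝒜L X ν := infOn_mul_le_lowerSInt h𝒜L hν hX0 hX1 hHi₀

theorem mul_lowSum_cond (h𝒜L : IsFieldOver H 𝒜L) (hμ : IsFAP 𝒜L μ) {K : Set Ω}
    (hpos : 0 < μ K) (hXY : ∀ i, H i ⊆ K → Y i = X i) (hY : ∀ i, Disjoint (H i) K → Y i = 0)
    {T : Finset (Set Ω)} (hT : IsFinPart 𝒜L T) (href : Refines T (pairPart K)) :
    μ K * lowSum H X (fun B => μ (B ∩ K) / μ K) T = lowSum H Y μ T := by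
  rw [lowSum, lowSum, Finset.mul_sum]
  refine Finset.sum_congr rfl fun A hA => ?_
  rcases href.subset_or_subset_compl hA with hAK | hAK
  · rw [inter_eq_self_of_subset_left hAK, infOn_congr fun i hi => hXY i (hi.trans hAK)]
    field_simp
  · have hYA : infOn H Y A = 0 := infOn_eq_of_forall h𝒜L (hT.mem hA) (hT.nonempty hA)
      fun i hi => hY i (subset_compl_iff_disjoint_right.1 (hi.trans hAK))
    rw [hYA, subset_compl_iff_disjoint_right.1 hAK |>.inter_eq, hμ.empty h𝒜L.1]
    simp

theorem lowerSInt_cond (h𝒜L : IsFieldOver H 𝒜L) (hμ : IsFAP 𝒜L μ) {K : Set Ω}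
    (hK : K ∈ 𝒜L) (hpos : 0 < μ K) (hXY : ∀ i, H i ⊆ K → Y i = X i)
    (hY : ∀ i, Disjoint (H i) K → Y i = 0) (hX0 : ∀ i, 0 ≤ X i) (hX1 : ∀ i, X i ≤ 1)
    (hY0 : ∀ i, 0 ≤ Y i) (hY1 : ∀ i, Y i ≤ 1) :
    lowerSInt H 𝒜L X (fun B => μ (B ∩ K) / μ K) = lowerSInt H 𝒜L Y μ / μ K := by
  have hν := (hμ.cond h𝒜L.1 hK hpos)
  have hKp := isFinPart_pairPart h𝒜L.1 hK
  refine le_antisymm (lowerSInt_le h𝒜L fun T hT => ?_) ?_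
  · have hT' := isFinPart_commonRef h𝒜L.1 hT hKp
    rw [le_div_iff₀ hpos, mul_comm]
    calc μ K * lowSum H X (fun B => μ (B ∩ K) / μ K) T
        ≤ μ K * lowSum H X (fun B => μ (B ∩ K) / μ K) (commonRef T (pairPart K)) :=
          mul_le_mul_of_nonneg_left (lowSum_le_lowSum_of_refines h𝒜L hν hX0 hT hT'
            refines_commonRef_left) hpos.le
      _ = lowSum H Y μ (commonRef T (pairPart K)) :=
          mul_lowSum_cond h𝒜L hμ hpos hXY hY hT' refines_commonRef_right
      _ ≤ lowerSInt H 𝒜L Y μ := lowSum_le_lowerSInt h𝒜L hμ hY0 hY1 hT'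
  · rw [div_le_iff₀ hpos]
    refine lowerSInt_le h𝒜L fun T hT => ?_
    have hT' := isFinPart_commonRef h𝒜L.1 hT hKp
    calc lowSum H Y μ T ≤ lowSum H Y μ (commonRef T (pairPart K)) :=
          lowSum_le_lowSum_of_refines h𝒜L hμ hY0 hT hT' refines_commonRef_left
      _ = μ K * lowSum H X (fun B => μ (B ∩ K) / μ K) (commonRef T (pairPart K)) :=
          (mul_lowSum_cond h𝒜L hμ hpos hXY hY hT' refines_commonRef_right).symm
      _ ≤ lowerSInt H 𝒜L X (fun B => μ (B ∩ K) / μ K) * μ K := by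
          rw [mul_comm]
          exact mul_le_mul_of_nonneg_right (lowSum_le_lowerSInt h𝒜L hν hX0 hX1 hT') hpos.le

end SpecialValues

theorem IsStrategy.lowerSInt_cond {H : ι → Set Ω} {𝒜L 𝒜 : Set (Set Ω)} {π : Set Ω → ℝ}
    {σ : Set Ω → ι → ℝ} (hσ : IsStrategy 𝒜 H σ) (h𝒜 : IsSetField 𝒜) (h𝒜L : IsFieldOver H 𝒜L)
    (hsub : 𝒜L ⊆ 𝒜) (hπ : IsFAP 𝒜L π) {F K : Set Ω} (hF : F ∈ 𝒜) (hK : K ∈ 𝒜L)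
    (hpos : 0 < π K) :
    lowerSInt H 𝒜L (σ F) (fun B => π (B ∩ K) / π K) = lowerSInt H 𝒜L (σ (F ∩ K)) π / π K :=
  have hFK := h𝒜.inter_mem hF (hsub hK)
  _root_.lowerSInt_cond h𝒜L hπ hK hpos (fun _ hi => hσ.inter_eq h𝒜 hF (hsub hK) hi)
    (fun _ hi => hσ.eq_zero h𝒜 hFK (hi.mono_right inter_subset_right))
    (hσ.nonneg hF) (hσ.le_one hF) (hσ.nonneg hFK) (hσ.le_one hFK)

theorem sSup_add_sSup_le {s t : Set ℝ} (hs : s.Nonempty) (ht : t.Nonempty) {c : ℝ}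
    (h : ∀ a ∈ s, ∀ b ∈ t, a + b ≤ c) : sSup s + sSup t ≤ c := by
  have : sSup s ≤ c - sSup t := csSup_le hs fun a ha =>
    le_sub_comm.1 (csSup_le ht fun b hb => le_sub_iff_add_le'.2 (h a ha b hb))
  linarith

noncomputable def generatedPart (C : ℕ → Set Ω) : ℕ → Finset (Set Ω)
  | 0 => pairPart univ
  | n + 1 => commonRef (generatedPart C n) (pairPart (C n))

section Additivity

variable {H : ι → Set Ω} {𝒜L : Set (Set Ω)} {X Y : ι → ℝ} {μ : Set Ω → ℝ}
  {C : ℕ → Set Ω}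

theorem isFinPart_generatedPart (h𝒜L : IsSetField 𝒜L) (hC : ∀ k, C k ∈ 𝒜L) :
    ∀ n, IsFinPart 𝒜L (generatedPart C n)
  | 0 => isFinPart_pairPart h𝒜L h𝒜L.1
  | n + 1 => isFinPart_commonRef h𝒜L (isFinPart_generatedPart h𝒜L hC n)
      (isFinPart_pairPart h𝒜L (hC n))

theorem subset_or_subset_compl_of_mem_generatedPart {n k : ℕ} (hk : k < n) {A : Set Ω}
    (hA : A ∈ generatedPart C n) : A ⊆ C k ∨ A ⊆ (C k)ᶜ := by
  induction n generalizing A with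
  | zero => exact absurd hk k.not_lt_zero
  | succ n ih =>
    rcases (Nat.lt_succ_iff.1 hk).lt_or_eq with hk | rfl
    · obtain ⟨A', hA', hAA'⟩ := refines_commonRef_left A hA
      exact (ih hk hA').imp hAA'.trans hAA'.trans
    · exact refines_commonRef_right.subset_or_subset_compl hA

/-- The cells generated by sets sandwiched between `X ≥ (k + 1) δ` and `X ≥ k δ` separate any two
pieces whose values differ by more than `2 δ`. -/
theorem exists_isFinPart_osc_le (h𝒜L : IsFieldOver H 𝒜L) (hH : IsPartition H)
    (hX : ALContinuous H 𝒜L X) (hX0 : ∀ i, 0 ≤ X i) (hX1 : ∀ i, X i ≤ 1) {ε : ℝ}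
    (hε : 0 < ε) : ∃ T, IsFinPart 𝒜L T ∧ ∀ A ∈ T, ∀ i j, H i ⊆ A → H j ⊆ A → X i ≤ X j + ε := by
  set δ := ε / 2 with hδ
  have hδpos : 0 < δ := half_pos hε
  choose C hC hClow hChigh using fun k : ℕ => hX.2 (k * δ) δ hδpos
  refine ⟨generatedPart C (⌊1 / δ⌋₊ + 2), isFinPart_generatedPart h𝒜L.1 hC _,
    fun A hA i j hi hj => le_of_not_gt fun hji => ?_⟩
  set k := ⌊X j / δ⌋₊ + 1
  have hjk : X j < k * δ := by
    have := Nat.lt_floor_add_one (X j / δ)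
    rw [div_lt_iff₀ hδpos] at this
    exact_mod_cast this
  have hik : k * δ + δ ≤ X i := by
    have := Nat.floor_le (div_nonneg (hX0 j) hδpos.le)
    rw [le_div_iff₀ hδpos] at this
    push_cast [k]
    linarith
  have hkn : k < ⌊1 / δ⌋₊ + 2 := by
    have := Nat.floor_le_floor (div_le_div_of_nonneg_right (hX1 j) hδpos.le)
    omega
  have hiC : H i ⊆ C k := (subset_biUnion_of_mem (u := H) (show i ∈ {i | k * δ + δ ≤ X i} from
    hik)).trans (hClow k)
  have hAC : A ⊆ C k := (subset_or_subset_compl_of_mem_generatedPart hkn hA).resolve_right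
    fun hAC => (hH.1 i).ne_empty (subset_empty_iff.1 fun ω hω => hAC (hi hω) (hiC hω))
  exact hjk.not_ge (hH.mem_of_subset_biUnion ((hj.trans hAC).trans (hChigh k)))

theorem lowerSInt_add (h𝒜L : IsFieldOver H 𝒜L) (hH : IsPartition H) (hμ : IsFAP 𝒜L μ)
    (hX0 : ∀ i, 0 ≤ X i) (hX1 : ∀ i, X i ≤ 1) (hY0 : ∀ i, 0 ≤ Y i) (hY1 : ∀ i, Y i ≤ 1)
    (hY : ALContinuous H 𝒜L Y) :
    lowerSInt H 𝒜L (X + Y) μ = lowerSInt H 𝒜L X μ + lowerSInt H 𝒜L Y μ := by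
  have hXY0 : ∀ i, 0 ≤ (X + Y) i := fun i => add_nonneg (hX0 i) (hY0 i)
  have hXY2 : ∀ i, (X + Y) i ≤ 2 := fun i => by simp only [Pi.add_apply]; linarith [hX1 i, hY1 i]
  refine le_antisymm (le_of_forall_pos_le_add fun ε hε => lowerSInt_le h𝒜L fun T hT => ?_) ?_
  · obtain ⟨Tε, hTε, hosc⟩ := exists_isFinPart_osc_le h𝒜L hH hY hY0 hY1 hε
    have hT' := isFinPart_commonRef h𝒜L.1 hT hTε
    have hosc' : ∀ A ∈ commonRef T Tε, ∀ i j, H i ⊆ A → H j ⊆ A → Y i ≤ Y j + ε :=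
      fun A hA i j hi hj =>
        let ⟨B, hB, hAB⟩ := refines_commonRef_right A hA
        hosc B hB i j (hi.trans hAB) (hj.trans hAB)
    calc lowSum H (X + Y) μ T ≤ lowSum H (X + Y) μ (commonRef T Tε) :=
          lowSum_le_lowSum_of_refines h𝒜L hμ hXY0 hT hT' refines_commonRef_left
      _ ≤ lowSum H X μ (commonRef T Tε) + lowSum H Y μ (commonRef T Tε) + ε :=
          lowSum_add_le h𝒜L hμ hX0 hY0 hT' hosc'
      _ ≤ lowerSInt H 𝒜L X μ + lowerSInt H 𝒜L Y μ + ε := by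
          gcongr
          exacts [lowSum_le_lowerSInt h𝒜L hμ hX0 hX1 hT', lowSum_le_lowerSInt h𝒜L hμ hY0 hY1 hT']
  · rw [lowerSInt_eq_sSup, lowerSInt_eq_sSup]
    refine sSup_add_sSup_le (nonempty_lowSums h𝒜L) (nonempty_lowSums h𝒜L) ?_
    rintro _ ⟨T₁, hT₁, rfl⟩ _ ⟨T₂, hT₂, rfl⟩
    have hT' := isFinPart_commonRef h𝒜L.1 hT₁ hT₂
    calc lowSum H X μ T₁ + lowSum H Y μ T₂
        ≤ lowSum H X μ (commonRef T₁ T₂) + lowSum H Y μ (commonRef T₁ T₂) :=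
          add_le_add (lowSum_le_lowSum_of_refines h𝒜L hμ hX0 hT₁ hT' refines_commonRef_left)
            (lowSum_le_lowSum_of_refines h𝒜L hμ hY0 hT₂ hT' refines_commonRef_right)
      _ ≤ lowSum H (X + Y) μ (commonRef T₁ T₂) := lowSum_add_lowSum_le h𝒜L hμ hX0 hY0 hT'
      _ ≤ lowerSInt H 𝒜L (X + Y) μ := lowSum_le_lowerSInt h𝒜L hμ hXY0 hXY2 hT'

end Additivity

section LexCond

variable {τ : Type*} {r : τ → τ → Prop} [IsWellOrder τ r] {P : τ → Set Ω → ℝ} {K : Set Ω}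

variable (r P) in
noncomputable def lexCond (F K : Set Ω) : ℝ :=
  if h : ∃ t, 0 < P t K then
    P ((IsWellFounded.wf (r := r)).min {t | 0 < P t K} h) (F ∩ K) /
      P ((IsWellFounded.wf (r := r)).min {t | 0 < P t K} h) K
  else 0

theorem exists_lexCond_eq (hK : ∃ t, 0 < P t K) :
    ∃ t, 0 < P t K ∧ (∀ s, r s t → P s K ≤ 0) ∧ ∀ F, lexCond r P F K = P t (F ∩ K) / P t K :=
  ⟨_, (IsWellFounded.wf (r := r)).min_mem {t | 0 < P t K} hK,
    fun _ hs => not_lt.1 fun h => (IsWellFounded.wf (r := r)).not_lt_min {t | 0 < P t K} h hs,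
    fun F => by rw [lexCond, dif_pos hK]⟩

theorem lexCond_eq {t : τ} (ht : 0 < P t K) (hmin : ∀ s, r s t → P s K ≤ 0) (F : Set Ω) :
    lexCond r P F K = P t (F ∩ K) / P t K := by
  obtain ⟨t', ht', hmin', h⟩ := exists_lexCond_eq (r := r) ⟨t, ht⟩
  rcases trichotomous_of r t' t with hr | rfl | hr
  · exact absurd (hmin t' hr) ht'.not_ge
  · exact h F
  · exact absurd (hmin' t hr) ht.not_ge

theorem isFCP_lexCond {𝒜 : Set (Set Ω)} (h𝒜 : IsSetField 𝒜) (hP : ∀ t, IsFAP 𝒜 (P t))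
    (hcover : ∀ K ∈ 𝒜, K.Nonempty → ∃ t, 0 < P t K) : IsFCP 𝒜 (lexCond r P) := by
  refine ⟨fun E _ K _ _ => by simp only [lexCond, inter_assoc, inter_self],
    fun K hK hne => ?_, fun E hE F hF K hK hne hEne => ?_⟩
  · obtain ⟨t, ht, -, h⟩ := exists_lexCond_eq (r := r) (hcover K hK hne)
    simp only [h]
    exact (hP t).cond h𝒜 hK ht
  · obtain ⟨t, ht, hmin, h⟩ := exists_lexCond_eq (r := r) (hcover K hK hne)
    have hEK := h𝒜.inter_mem hE hK
    rw [h, h]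
    -- Either the tier `t` of `K` is also the tier of `E ∩ K`, or it does not charge `E ∩ K` and
    -- both sides vanish.
    rcases ((hP t).nonneg hEK).eq_or_lt with h0 | hpos
    · have hEFK : P t (E ∩ F ∩ K) = 0 := le_antisymm
        (h0 ▸ (hP t).mono h𝒜 (h𝒜.inter_mem (h𝒜.inter_mem hE hF) hK) hEK
          fun _ hx => ⟨hx.1.1, hx.2⟩) ((hP t).nonneg (h𝒜.inter_mem (h𝒜.inter_mem hE hF) hK))
      rw [hEFK, ← h0]
      simp
    · rw [lexCond_eq hpos fun s hs =>
        ((hP s).mono h𝒜 hEK hK inter_subset_right).trans (hmin s hs)]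
      rw [show F ∩ (E ∩ K) = E ∩ F ∩ K by ext; simp only [mem_inter_iff]; tauto]
      field_simp

end LexCond

noncomputable def strategicMeasure (H : ι → Set Ω) (𝒜L : Set (Set Ω)) (π : Set Ω → ℝ)
    (σ : Set Ω → ι → ℝ) (G : Set Ω) : ℝ :=
  lowerSInt H 𝒜L (σ G) π

section StrategicMeasure

variable {H : ι → Set Ω} {𝒜L 𝒜 : Set (Set Ω)} {π : Set Ω → ℝ} {σ : Set Ω → ι → ℝ}
  (hH : IsPartition H) (h𝒜L : IsFieldOver H 𝒜L) (h𝒜 : IsSetField 𝒜) (hsub : 𝒜L ⊆ 𝒜)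
  (hπ : IsFAP 𝒜L π) (hσ : IsStrategy 𝒜 H σ)
include hH h𝒜L h𝒜 hsub hπ hσ

theorem strategicMeasure_eq {B : Set Ω} (hB : B ∈ 𝒜L) : strategicMeasure H 𝒜L π σ B = π B := by
  rw [strategicMeasure, lowerSInt_eq_mul h𝒜L hπ hB zero_le_one le_rfl
    (fun i hi => hσ.eq_one (hsub hB) hi)
    (fun i hi => by rw [hσ.eq_indicator h𝒜 hH h𝒜L hsub hB, if_neg hi]), one_mul]

theorem strategicMeasure_inter_piece {F : Set Ω} (hF : F ∈ 𝒜) (i : ι) :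
    strategicMeasure H 𝒜L π σ (F ∩ H i) = σ F i * π (H i) := by
  have hHi := hsub (h𝒜L.2.1 i)
  refine lowerSInt_eq_mul h𝒜L hπ (h𝒜L.2.1 i) (hσ.nonneg hF i) (hσ.le_one hF i)
    (fun j hj => by rw [hH.eq_of_subset hj, hσ.inter_eq h𝒜 hF hHi le_rfl])
    fun j hj => hσ.eq_zero h𝒜 (h𝒜.inter_mem hF hHi) ?_
  exact (hH.2.1 fun hji : j = i => hj (hji ▸ le_rfl)).mono_right inter_subset_right

theorem isFAP_strategicMeasure (hcont : ∀ F ∈ 𝒜, ALContinuous H 𝒜L (σ F)) :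
    IsFAP 𝒜 (strategicMeasure H 𝒜L π σ) := by
  refine ⟨fun F hF => ⟨lowerSInt_nonneg h𝒜L hπ (hσ.nonneg hF) (hσ.le_one hF),
    lowerSInt_le_one h𝒜L hπ (hσ.nonneg hF) (hσ.le_one hF)⟩, ?_, fun A hA B hB hd => ?_⟩
  · rw [strategicMeasure_eq hH h𝒜L h𝒜 hsub hπ hσ h𝒜L.1.1, hπ.2.1]
  · have hAB : σ (A ∪ B) = σ A + σ B := funext fun i => (hσ.isFAP i).union hA hB hd
    rw [strategicMeasure, hAB, lowerSInt_add h𝒜L hH hπ (hσ.nonneg hA) (hσ.le_one hA)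
      (hσ.nonneg hB) (hσ.le_one hB) (hcont B hB)]
    rfl

end StrategicMeasure

abbrev tierOrder (Ω : Type*) : Bool ⊕ (Ω × Bool) → Bool ⊕ (Ω × Bool) → Prop :=
  Sum.Lex (· < ·) (Prod.Lex WellOrderingRel (· < ·))

/-- In the order `tierOrder`: the strategic measure, `σ(·|H i₀)`, and then, along a well-order
of `Ω`, `σ(·|H ω)` followed by the point mass at `ω`. The point masses give every nonempty event
a tier of positive mass; a nonempty event of `𝒜L` never reaches them, since it gets mass `1` from
`σ(·|H ω)` first. -/
noncomputable def canonicalTiers {H : ι → Set Ω} (hH : IsPartition H) (𝒜L : Set (Set Ω))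
    (π : Set Ω → ℝ) (σ : Set Ω → ι → ℝ) (i₀ : ι) : Bool ⊕ (Ω × Bool) → Set Ω → ℝ
  | .inl false => strategicMeasure H 𝒜L π σ
  | .inl true => (σ · i₀)
  | .inr (ω, false) => (σ · (hH.pieceOf ω))
  | .inr (ω, true) => fun G => if ω ∈ G then 1 else 0

noncomputable def canonicalExt {H : ι → Set Ω} (hH : IsPartition H) (𝒜L : Set (Set Ω))
    (π : Set Ω → ℝ) (σ : Set Ω → ι → ℝ) (i₀ : ι) : Set Ω → Set Ω → ℝ :=
  lexCond (tierOrder Ω) (canonicalTiers hH 𝒜L π σ i₀)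

section CanonicalExt

variable {H : ι → Set Ω} {𝒜L 𝒜 : Set (Set Ω)} {π : Set Ω → ℝ} {σ : Set Ω → ι → ℝ}
  (hH : IsPartition H) (h𝒜L : IsFieldOver H 𝒜L) (h𝒜 : IsSetField 𝒜) (hsub : 𝒜L ⊆ 𝒜)
  (hπ : IsFAP 𝒜L π) (hσ : IsStrategy 𝒜 H σ) (i₀ : ι) {K : Set Ω} (hK : K ∈ 𝒜L)
include hH h𝒜L h𝒜 hsub hπ hσ

theorem isFCP_canonicalExt (hcont : ∀ F ∈ 𝒜, ALContinuous H 𝒜L (σ F)) :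
    IsFCP 𝒜 (canonicalExt hH 𝒜L π σ i₀) := by
  refine isFCP_lexCond h𝒜 ?_ fun K _ ⟨ω, hω⟩ => ⟨.inr (ω, true), by simp [canonicalTiers, hω]⟩
  rintro ((_ | _) | ⟨ω, _ | _⟩)
  exacts [isFAP_strategicMeasure hH h𝒜L h𝒜 hsub hπ hσ hcont, hσ.isFAP i₀,
    hσ.isFAP (hH.pieceOf ω), isFAP_dirac 𝒜 ω]

include hK

theorem canonicalExt_of_pos (hpos : 0 < π K) (F : Set Ω) :
    canonicalExt hH 𝒜L π σ i₀ F K = strategicMeasure H 𝒜L π σ (F ∩ K) / π K := by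
  have hm := strategicMeasure_eq hH h𝒜L h𝒜 hsub hπ hσ hK
  rw [canonicalExt, lexCond_eq (t := .inl false) (by rwa [canonicalTiers, hm])]
  · rw [canonicalTiers, hm]
  · rintro s hs
    cases hs with | inl h => exact absurd h not_lt_bot

theorem canonicalExt_of_subset (hπK : π K = 0) (hi₀ : H i₀ ⊆ K) {F : Set Ω} (hF : F ∈ 𝒜) :
    canonicalExt hH 𝒜L π σ i₀ F K = σ F i₀ := by
  have hσK := hσ.eq_one (hsub hK) hi₀
  rw [canonicalExt, lexCond_eq (t := .inl true) (by simp [canonicalTiers, hσK])]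
  · exact hσ.inter_div_eq h𝒜 hF (hsub hK) hi₀
  · rintro s hs
    cases hs with | inl h => ?_
    obtain rfl : _ = false := by simpa using lt_top_iff_ne_top.1 h
    rw [canonicalTiers, strategicMeasure_eq hH h𝒜L h𝒜 hsub hπ hσ hK, hπK]

theorem canonicalExt_of_null (hKne : K.Nonempty) (hπK : π K = 0) :
    ∃ j, H j ⊆ K ∧ ∀ F ∈ 𝒜, canonicalExt hH 𝒜L π σ i₀ F K = σ F j := by
  obtain ⟨t, ht, hmin, h⟩ := exists_lexCond_eq (r := tierOrder Ω)
    (P := canonicalTiers hH 𝒜L π σ i₀) (K := K)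
    ⟨.inr (hKne.some, true), by simp [canonicalTiers, hKne.some_mem]⟩
  have of_pos : ∀ j, 0 < σ K j → canonicalTiers hH 𝒜L π σ i₀ t = (σ · j) →
      ∃ j, H j ⊆ K ∧ ∀ F ∈ 𝒜, canonicalExt hH 𝒜L π σ i₀ F K = σ F j := fun j hj ht => by
    have hjK := hσ.subset_of_pos h𝒜 hH h𝒜L hsub hK hj
    exact ⟨j, hjK, fun F hF => by
      rw [canonicalExt, h, ht, hσ.inter_div_eq h𝒜 hF (hsub hK) hjK]⟩
  rcases t with (_ | _) | ⟨ω, _ | _⟩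
  · rw [canonicalTiers, strategicMeasure_eq hH h𝒜L h𝒜 hsub hπ hσ hK, hπK] at ht
    exact absurd ht (lt_irrefl 0)
  · exact of_pos i₀ ht rfl
  · exact of_pos _ ht rfl
  · have hω : ω ∈ K := by
      by_contra hω
      simp [canonicalTiers, hω] at ht
    have : σ K (hH.pieceOf ω) ≤ 0 :=
      hmin (.inr (ω, false)) (Sum.Lex.inr (Prod.Lex.right _ Bool.false_lt_true))
    rw [hσ.eq_one (hsub hK) (h𝒜L.pieceOf_subset hH hK hω)] at this
    exact absurd this one_pos.not_ge

end CanonicalExt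

theorem canonicalExt_mem {H : ι → Set Ω} {𝒜L 𝒜 : Set (Set Ω)} {π : Set Ω → ℝ}
    {σ : Set Ω → ι → ℝ} (hH : IsPartition H) (h𝒜L : IsFieldOver H 𝒜L) (h𝒜 : IsSetField 𝒜)
    (hsub : 𝒜L ⊆ 𝒜) (hπ : IsFAP 𝒜L π) (hσ : IsStrategy 𝒜 H σ)
    (hcont : ∀ F ∈ 𝒜, ALContinuous H 𝒜L (σ F)) (i₀ : ι) :
    canonicalExt hH 𝒜L π σ i₀ ∈ QfdSet 𝒜 𝒜L H π σ := by
  refine ⟨isFCP_canonicalExt hH h𝒜L h𝒜 hsub hπ hσ i₀ hcont, ⟨fun B hB => ?_, fun F hF i => ?_⟩,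
    fun F hF K hK hKne => ?_⟩
  · rw [canonicalExt_of_pos hH h𝒜L h𝒜 hsub hπ hσ i₀ h𝒜L.1.1 (hπ.2.1 ▸ one_pos), inter_univ,
      hπ.2.1, div_one, strategicMeasure_eq hH h𝒜L h𝒜 hsub hπ hσ hB]
  · have hHi := h𝒜L.2.1 i
    rcases (hπ.nonneg hHi).eq_or_lt with h0 | hpos
    · obtain ⟨j, hj, hval⟩ := canonicalExt_of_null hH h𝒜L h𝒜 hsub hπ hσ i₀ hHi (hH.1 i) h0.symm
      rw [hval F hF, hH.eq_of_subset hj]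
    · rw [canonicalExt_of_pos hH h𝒜L h𝒜 hsub hπ hσ i₀ hHi hpos,
        strategicMeasure_inter_piece hH h𝒜L h𝒜 hsub hπ hσ hF, mul_div_cancel_right₀ _ hpos.ne']
  · rcases (hπ.nonneg hK).eq_or_lt with h0 | hpos
    · obtain ⟨j, hj, hval⟩ := canonicalExt_of_null hH h𝒜L h𝒜 hsub hπ hσ i₀ hK hKne h0.symm
      rw [hval F hF, lowerSInt_congr (ν := (σ · j)) fun B hB => hval B (hsub hB),
        lowerSInt_eq_of_apply_piece_eq_one h𝒜L hH ((hσ.isFAP j).of_subset hsub)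
          (hσ.eq_one (hsub (h𝒜L.2.1 j)) le_rfl) (hσ.nonneg hF) (hσ.le_one hF)]
    · have hcond : ∀ B ∈ 𝒜L, canonicalExt hH 𝒜L π σ i₀ B K = π (B ∩ K) / π K := fun B hB => by
        rw [canonicalExt_of_pos hH h𝒜L h𝒜 hsub hπ hσ i₀ hK hpos,
          strategicMeasure_eq hH h𝒜L h𝒜 hsub hπ hσ (h𝒜L.1.inter_mem hB hK)]
      rw [canonicalExt_of_pos hH h𝒜L h𝒜 hsub hπ hσ i₀ hK hpos, lowerSInt_congr hcond,
        hσ.lowerSInt_cond h𝒜 h𝒜L hsub hπ hF hK hpos, strategicMeasure]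

theorem IsFCP.apply_eq_one {𝒜 : Set (Set Ω)} {Q : Set Ω → Set Ω → ℝ} (hQ : IsFCP 𝒜 Q)
    (h𝒜 : IsSetField 𝒜) {F K : Set Ω} (hF : F ∈ 𝒜) (hK : K ∈ 𝒜) (hKne : K.Nonempty)
    (hFK : F ∩ K = K) : Q F K = 1 := by
  have huniv := hQ.1 univ h𝒜.1 K hK hKne
  have h1 : Q univ K = 1 := (hQ.2.1 K hK hKne).2.1
  rw [univ_inter] at huniv
  rw [hQ.1 F hF K hK hKne, hFK, ← huniv, h1]

section QfdSet

variable {H : ι → Set Ω} {𝒜L 𝒜 : Set (Set Ω)} {π : Set Ω → ℝ} {σ : Set Ω → ι → ℝ}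
  {Q : Set Ω → Set Ω → ℝ} {F K : Set Ω}

theorem QfdSet.apply_of_pos (hQ : Q ∈ QfdSet 𝒜 𝒜L H π σ) (h𝒜L : IsFieldOver H 𝒜L)
    (h𝒜 : IsSetField 𝒜) (hsub : 𝒜L ⊆ 𝒜) (hπ : IsFAP 𝒜L π) (hσ : IsStrategy 𝒜 H σ)
    (hF : F ∈ 𝒜) (hK : K ∈ 𝒜L) (hKne : K.Nonempty) (hpos : 0 < π K) :
    Q F K = lowerSInt H 𝒜L (σ (F ∩ K)) π / π K := by
  obtain ⟨hfcp, ⟨hprior, -⟩, hdis⟩ := hQ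
  have hcond : ∀ B ∈ 𝒜L, Q B K = π (B ∩ K) / π K := fun B hB => by
    have h := hfcp.2.2 K (hsub hK) B (hsub hB) univ h𝒜.1 (hKne.mono (subset_univ K))
      (by rwa [inter_univ])
    rw [inter_univ, hprior K hK, hprior _ (h𝒜L.1.inter_mem hK hB)] at h
    rw [inter_comm, h, mul_div_cancel_left₀ _ hpos.ne']
  rw [hdis F hF K hK hKne, lowerSInt_congr hcond,
    hσ.lowerSInt_cond h𝒜 h𝒜L hsub hπ hF hK hpos]

theorem QfdSet.infOn_le_apply (hQ : Q ∈ QfdSet 𝒜 𝒜L H π σ) (h𝒜L : IsFieldOver H 𝒜L)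
    (h𝒜 : IsSetField 𝒜) (hsub : 𝒜L ⊆ 𝒜) (hσ : IsStrategy 𝒜 H σ) (hF : F ∈ 𝒜) (hK : K ∈ 𝒜L)
    (hKne : K.Nonempty) : infOn H (σ F) K ≤ Q F K := by
  obtain ⟨hfcp, -, hdis⟩ := hQ
  calc infOn H (σ F) K = infOn H (σ F) K * Q K K := by
        rw [hfcp.apply_eq_one h𝒜 (hsub hK) (hsub hK) hKne (inter_self K), mul_one]
    _ ≤ Q F K := hdis F hF K hK hKne ▸ infOn_mul_le_lowerSInt h𝒜L
        ((hfcp.2.1 K (hsub hK) hKne).of_subset hsub) (hσ.nonneg hF) (hσ.le_one hF) hK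

end QfdSet

section LowEnv

variable {Ps : Set (Set Ω → Set Ω → ℝ)} {F K : Set Ω}

theorem lowEnv_eq_of_forall {c : ℝ} (hne : Ps.Nonempty) (h : ∀ P ∈ Ps, P F K = c) :
    lowEnv Ps F K = c := by
  rw [lowEnv, (hne.image _).subset_singleton_iff.1 (image_subset_iff.2 h), csInf_singleton]

theorem lowEnv_eq_sInf {S : Set ℝ} (hS : S.Nonempty) (hle : ∀ P ∈ Ps, sInf S ≤ P F K)
    (hS' : ∀ x ∈ S, ∃ P ∈ Ps, P F K = x) : lowEnv Ps F K = sInf S := by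
  have hsub : S ⊆ (fun P => P F K) '' Ps := hS'
  refine le_antisymm (csInf_le_csInf ⟨sInf S, ?_⟩ hS hsub) (le_csInf (hS.mono hsub) ?_) <;>
    exact forall_mem_image.2 hle

end LowEnv

end

theorem statement7_general {Ω ι κ : Type*} (H : ι → Set Ω) (E : κ → Set Ω)
    (𝒜L 𝒜E 𝒜 : Set (Set Ω))
    (hH : IsPartition H)
    (h𝒜L : IsFieldOver H 𝒜L)
    (h𝒜 : IsJointField H E 𝒜L 𝒜E 𝒜)
    (π : Set Ω → ℝ) (hπ : IsFAP 𝒜L π)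
    (σ : Set Ω → ι → ℝ) (hσ : IsStrategy 𝒜 H σ)
    (hcont : ∀ F ∈ 𝒜, ALContinuous H 𝒜L fun i => σ F i)
    (F K : Set Ω) (hF : F ∈ 𝒜) (hK : K ∈ 𝒜L) (hKne : K.Nonempty) :
    (F ∩ K = K → lowEnv (QfdSet 𝒜 𝒜L H π σ) F K = 1) ∧
    (F ∩ K ≠ K →
      (0 < π K → lowEnv (QfdSet 𝒜 𝒜L H π σ) F K =
        lowerSInt H 𝒜L (fun i => σ (F ∩ K) i) π / π K) ∧
      (π K = 0 → lowEnv (QfdSet 𝒜 𝒜L H π σ) F K =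
        sInf {x | ∃ i, H i ⊆ K ∧ x = σ F i})) := by
  obtain ⟨h𝒜f, hsub, -⟩ := h𝒜
  have hmem := canonicalExt_mem hH h𝒜L h𝒜f hsub hπ hσ hcont
  obtain ⟨i₀, hi₀⟩ := h𝒜L.exists_piece_subset hK hKne
  have hne : (QfdSet 𝒜 𝒜L H π σ).Nonempty := ⟨_, hmem i₀⟩
  refine ⟨fun hFK => lowEnv_eq_of_forall hne fun Q hQ =>
      hQ.1.apply_eq_one h𝒜f hF (hsub hK) hKne hFK,
    fun _ => ⟨fun hpos => lowEnv_eq_of_forall hne fun Q hQ =>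
      QfdSet.apply_of_pos hQ h𝒜L h𝒜f hsub hπ hσ hF hK hKne hpos, fun hπK => ?_⟩⟩
  refine lowEnv_eq_sInf ⟨_, i₀, hi₀, rfl⟩
    (fun Q hQ => QfdSet.infOn_le_apply hQ h𝒜L h𝒜f hsub hσ hF hK hKne) ?_
  rintro _ ⟨i, hi, rfl⟩
  exact ⟨_, hmem i, canonicalExt_of_subset hH h𝒜L h𝒜f hsub hπ hσ i hK hπK hi hF⟩

/-- closed form of `Q^fd_*(F|K)` for conditioning events `K ∈ 𝒜L⁰`. -/
theorem statement7 {Ω ι κ : Type*} [Nonempty Ω] (H : ι → Set Ω) (E : κ → Set Ω)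
    (𝒜L 𝒜E 𝒜 : Set (Set Ω))
    (hH : IsPartition H) (hE : IsPartition E)
    (h𝒜L : IsFieldOver H 𝒜L) (h𝒜E : IsFieldOver E 𝒜E)
    (h𝒜 : IsJointField H E 𝒜L 𝒜E 𝒜)
    (π : Set Ω → ℝ) (hπ : IsFAP 𝒜L π)
    (σ : Set Ω → ι → ℝ) (hσ : IsStrategy 𝒜 H σ)
    (hcont : ∀ F ∈ 𝒜, ALContinuous H 𝒜L fun i => σ F i)
    (F K : Set Ω) (hF : F ∈ 𝒜) (hK : K ∈ 𝒜L) (hKne : K.Nonempty) :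
    (F ∩ K = K → lowEnv (QfdSet 𝒜 𝒜L H π σ) F K = 1) ∧
    (F ∩ K ≠ K →
      (0 < π K → lowEnv (QfdSet 𝒜 𝒜L H π σ) F K =
        lowerSInt H 𝒜L (fun i => σ (F ∩ K) i) π / π K) ∧
      (π K = 0 → lowEnv (QfdSet 𝒜 𝒜L H π σ) F K =
        sInf {x | ∃ i, H i ⊆ K ∧ x = σ F i})) :=
  statement7_general H E 𝒜L 𝒜E 𝒜 hH h𝒜L h𝒜 π hπ σ hσ hcont F K hF hK hKne
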